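/- Let 𝔄 be a C*-algebra and let A, E be 𝔄-C*-modules. Assume E is injective as an 𝔄-module in the following sense: for every C*-subalgebra and 𝔄-submodule B ⊆ A, every n ≥ 1, and every c.c.p. module map φ: B → Mₙ(E), there exists a c.c.p. module map φ̃: A → Mₙ(E) with φ̃|_B = φ. Then A is E-nuclear if and only if A is locally E-nuclear, i.e., for every finite set F ⊆ A and every ε > 0 there is an E-nuclear C*-subalgebra and 𝔄-submodule B ⊆ A such that every a ∈ F lies within distance ε (in norm) of B. -/

import Mathlib

/-! Definitions for finite dimensional approximation properties of `𝔄`-`C*`-modules,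
following Amini, "Finite dimensional approximation properties of C*-modules". -/

namespace CStarModulePaper

variable {𝔄 : Type*} [NonUnitalCStarAlgebra 𝔄]

section Defs

variable {R S : Type*}
  [NonUnitalRing R] [StarRing R] [Module ℂ R]
  [NonUnitalRing S] [StarRing S] [Module ℂ S]

/-- An element of a matrix `*`-ring over a (subalgebra of a) C*-algebra is *positive*
iff it is of the form `Xᴴ * X`. -/
def MatIsPos {k : ℕ} (M : Matrix (Fin k) (Fin k) R) : Prop :=
  ∃ X : Matrix (Fin k) (Fin k) R, M = star X * X

/-- A map is *completely positive* if all its matrix amplifications preserve positivity. -/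
def IsCompletelyPositive (φ : R → S) : Prop :=
  ∀ (k : ℕ) (M : Matrix (Fin k) (Fin k) R), MatIsPos M → MatIsPos (M.map φ)

/-- A *bounded module map* between right `𝔄`-modules, with respect to the given norm
functions `nR`, `nS` and right `𝔄`-actions `actR`, `actS`: a bounded linear map
intertwining the actions. -/
structure IsBddModuleMap (nR : R → ℝ) (nS : S → ℝ)
    (actR : R → 𝔄 → R) (actS : S → 𝔄 → S) (φ : R → S) : Prop where
  map_add : ∀ a b, φ (a + b) = φ a + φ b
  map_smul : ∀ (c : ℂ) (a : R), φ (c • a) = c • φ a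
  bounded : ∃ C : ℝ, ∀ a, nS (φ a) ≤ C * nR a
  map_act : ∀ (a : R) (α : 𝔄), φ (actR a α) = actS (φ a) α

/-- A *completely positive module map*: a bounded module map which is completely positive. -/
structure IsCpModuleMap (nR : R → ℝ) (nS : S → ℝ)
    (actR : R → 𝔄 → R) (actS : S → 𝔄 → S) (φ : R → S) : Prop where
  map_add : ∀ a b, φ (a + b) = φ a + φ b
  map_smul : ∀ (c : ℂ) (a : R), φ (c • a) = c • φ a
  bounded : ∃ C : ℝ, ∀ a, nS (φ a) ≤ C * nR a
  cp : IsCompletelyPositive φ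
  map_act : ∀ (a : R) (α : 𝔄), φ (actR a α) = actS (φ a) α

/-- A *c.c.p. module map*: a completely positive, contractive module map. -/
structure IsCcpModuleMap (nR : R → ℝ) (nS : S → ℝ)
    (actR : R → 𝔄 → R) (actS : S → 𝔄 → S) (φ : R → S) : Prop where
  map_add : ∀ a b, φ (a + b) = φ a + φ b
  map_smul : ∀ (c : ℂ) (a : R), φ (c • a) = c • φ a
  cp : IsCompletelyPositive φ
  contractive : ∀ a, nS (φ a) ≤ nR a
  map_act : ∀ (a : R) (α : 𝔄), φ (actR a α) = actS (φ a) α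

end Defs

/-- `act` is a compatible contractive right `𝔄`-action making the C*-algebra `A`
into an `𝔄`-C*-module. -/
structure IsCStarAction {A : Type*} [NonUnitalCStarAlgebra A]
    (act : A → 𝔄 → A) : Prop where
  act_add_left : ∀ a b α, act (a + b) α = act a α + act b α
  act_add_right : ∀ a α β, act a (α + β) = act a α + act a β
  act_smul_left : ∀ (c : ℂ) a α, act (c • a) α = c • act a α
  act_smul_right : ∀ (c : ℂ) a α, act a (c • α) = c • act a α
  norm_act_le : ∀ a α, ‖act a α‖ ≤ ‖a‖ * ‖α‖
  star_act : ∀ a α, star (act a α) = act (star a) (star α)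
  mul_act : ∀ a b α, act (a * b) α = a * act b α
  act_mul : ∀ a α β, act a (α * β) = act (act a α) β

/-- The (necessarily unique) C*-norm on the matrix algebra `Mₙ(E)` over a C*-algebra `E`,
described intrinsically: `‖X‖ = √(spectral radius of Xᴴ * X)`, the spectrum being computed
(algebraically) in the unitization, i.e. via the quasispectrum. -/
noncomputable def matCStarNorm {E : Type*} [NonUnitalCStarAlgebra E] {n : ℕ}
    (X : Matrix (Fin n) (Fin n) E) : ℝ :=
  Real.sqrt (sSup {r : ℝ | ∃ z ∈ quasispectrum ℂ (star X * X), r = ‖z‖})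

/-- The entrywise right `𝔄`-action on the matrix algebra `Mₙ(E)`. -/
def matAct {E : Type*} (actE : E → 𝔄 → E) {n : ℕ}
    (M : Matrix (Fin n) (Fin n) E) (α : 𝔄) : Matrix (Fin n) (Fin n) E :=
  M.map (fun x => actE x α)

/-- A module map `θ` between (subalgebras of) `𝔄`-C*-modules is *`E`-nuclear* if it is
point-norm approximated by compositions of c.c.p. module maps through the matrix
algebras `Mₙ(E)`. -/
def IsENuclear {R S E : Type*}
    [NonUnitalRing R] [StarRing R] [Module ℂ R]
    [NonUnitalRing S] [StarRing S] [Module ℂ S]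
    [NonUnitalCStarAlgebra E] (actE : E → 𝔄 → E)
    (nR : R → ℝ) (nS : S → ℝ) (actR : R → 𝔄 → R) (actS : S → 𝔄 → S)
    (θ : R → S) : Prop :=
  ∀ (F : Finset R) (ε : ℝ), 0 < ε →
    ∃ n : ℕ, 1 ≤ n ∧
      ∃ (φ : R → Matrix (Fin n) (Fin n) E) (ψ : Matrix (Fin n) (Fin n) E → S),
        IsCcpModuleMap nR matCStarNorm actR (matAct actE) φ ∧
        IsCcpModuleMap matCStarNorm nS (matAct actE) actS ψ ∧
        ∀ a ∈ F, nS (ψ (φ a) - θ a) < ε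

end CStarModulePaper

/-!
For the nontrivial direction, a c.c.p. factorisation `ψ ∘ φ` of `id_B` through `Mₙ(E)` extends,
by injectivity of `E`, to a factorisation through maps defined on all of `A`. As `ψ ∘ φ` is a
linear contraction, `‖ψ (φ a) - a‖ ≤ ‖ψ (φ b) - b‖ + 2 ‖a - b‖`, so approximating `F` by `B`
within `ε / 3` and `id_B` within `ε / 3` on the approximants approximates `id_A` within `ε`
on `F`. The other direction takes `B = A`.
-/

namespace CStarModulePaper

section MapsBetweenModules

variable {𝔄 R S T : Type*}
  [NonUnitalRing R] [StarRing R] [NonUnitalRing S] [StarRing S] [NonUnitalRing T] [StarRing T]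

theorem IsCompletelyPositive.comp {ψ : S → T} {φ : R → S}
    (hψ : IsCompletelyPositive ψ) (hφ : IsCompletelyPositive φ) :
    IsCompletelyPositive (ψ ∘ φ) := fun k M hM => by
  simpa only [Matrix.map_map] using hψ k _ (hφ k M hM)

theorem isCompletelyPositive_of_starRingHom {F : Type*} [FunLike F R S]
    [NonUnitalRingHomClass F R S] [StarHomClass F R S] (f : F) :
    IsCompletelyPositive f := by
  rintro k M ⟨X, rfl⟩
  refine ⟨X.map f, ?_⟩
  rw [Matrix.map_mul, Matrix.star_eq_conjTranspose, Matrix.star_eq_conjTranspose,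
    Matrix.conjTranspose_map f (map_star f)]

variable [Module ℂ R] [Module ℂ S] [Module ℂ T] {nR : R → ℝ} {nS : S → ℝ} {nT : T → ℝ}
  {actR : R → 𝔄 → R} {actS : S → 𝔄 → S} {actT : T → 𝔄 → T}

theorem IsCcpModuleMap.comp {ψ : S → T} {φ : R → S}
    (hψ : IsCcpModuleMap nS nT actS actT ψ) (hφ : IsCcpModuleMap nR nS actR actS φ) :
    IsCcpModuleMap nR nT actR actT (ψ ∘ φ) where
  map_add a b := by simp only [Function.comp_apply, hφ.map_add, hψ.map_add]
  map_smul c a := by simp only [Function.comp_apply, hφ.map_smul, hψ.map_smul]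
  cp := hψ.cp.comp hφ.cp
  contractive a := (hψ.contractive (φ a)).trans (hφ.contractive a)
  map_act a α := by simp only [Function.comp_apply, hφ.map_act, hψ.map_act]

theorem IsCcpModuleMap.map_sub {φ : R → S} (hφ : IsCcpModuleMap nR nS actR actS φ) (a b : R) :
    φ (a - b) = φ a - φ b := by
  rw [sub_eq_add_neg, ← neg_one_smul ℂ b, hφ.map_add, hφ.map_smul, neg_one_smul,
    ← sub_eq_add_neg]

theorem isCcpModuleMap_of_starAlgHom {F : Type*} [FunLike F R S]
    [NonUnitalAlgHomClass F ℂ R S] [StarHomClass F R S] (f : F)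
    (hnorm : ∀ a, nS (f a) ≤ nR a) (hact : ∀ a α, f (actR a α) = actS (f a) α) :
    IsCcpModuleMap nR nS actR actS f where
  map_add := map_add f
  map_smul := map_smul f
  cp := isCompletelyPositive_of_starRingHom f
  contractive := hnorm
  map_act := hact

theorem IsENuclear.id_of_retract {E : Type*} [NonUnitalCStarAlgebra E] {actE : E → 𝔄 → E}
    {i : S → R} {p : R → S} (hi : IsCcpModuleMap nS nR actS actR i)
    (hp : IsCcpModuleMap nR nS actR actS p) (hpi : ∀ s, p (i s) = s)
    (h : IsENuclear actE nR nR actR actR id) : IsENuclear actE nS nS actS actS id := by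
  classical
  intro G ε hε
  obtain ⟨n, hn, φ, ψ, hφ, hψ, happrox⟩ := h (G.image i) ε hε
  refine ⟨n, hn, φ ∘ i, p ∘ ψ, hφ.comp hi, hp.comp hψ, fun s hs => ?_⟩
  calc nS (p (ψ (φ (i s))) - s) = nS (p (ψ (φ (i s)) - i s)) := by rw [hp.map_sub, hpi]
    _ ≤ nR (ψ (φ (i s)) - i s) := hp.contractive _
    _ < ε := happrox (i s) (Finset.mem_image_of_mem i hs)

end MapsBetweenModules

theorem norm_sub_self_le_of_contraction {A : Type*} [SeminormedAddCommGroup A] {T : A → A}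
    (hsub : ∀ x y, T (x - y) = T x - T y) (hT : ∀ x, ‖T x‖ ≤ ‖x‖) (a b : A) :
    ‖T a - a‖ ≤ ‖T b - b‖ + 2 * ‖a - b‖ :=
  calc ‖T a - a‖ = ‖T (a - b) + (T b - b) + (b - a)‖ := by rw [hsub]; abel_nf
    _ ≤ ‖T (a - b)‖ + ‖T b - b‖ + ‖b - a‖ := norm_add₃_le
    _ ≤ ‖a - b‖ + ‖T b - b‖ + ‖a - b‖ := by rw [norm_sub_rev b a]; gcongr; exact hT _
    _ = ‖T b - b‖ + 2 * ‖a - b‖ := by ring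

variable {𝔄 A E : Type*} [NonUnitalCStarAlgebra A]
  [NonUnitalCStarAlgebra E] {actA : A → 𝔄 → A} {actE : E → 𝔄 → E}

theorem IsENuclear.top
    (h : IsENuclear actE (fun a : A => ‖a‖) (fun a : A => ‖a‖) actA actA id) :
    IsENuclear actE (fun b : (⊤ : NonUnitalStarSubalgebra ℂ A) => ‖(b : A)‖)
      (fun b : (⊤ : NonUnitalStarSubalgebra ℂ A) => ‖(b : A)‖)
      (fun b α => NonUnitalStarAlgebra.toTop (actA b α))
      (fun b α => NonUnitalStarAlgebra.toTop (actA b α)) id :=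
  h.id_of_retract
    (isCcpModuleMap_of_starAlgHom (NonUnitalStarSubalgebraClass.subtype _)
      (fun _ => le_rfl) fun _ _ => rfl)
    (isCcpModuleMap_of_starAlgHom NonUnitalStarAlgebra.toTop (fun _ => le_rfl)
      fun _ _ => rfl)
    fun _ => rfl

theorem IsENuclear.exists_approx_of_extend {B : NonUnitalStarSubalgebra ℂ A}
    {actB : B → 𝔄 → B} (hactB : ∀ (b : B) (α : 𝔄), (actB b α : A) = actA (b : A) α)
    (hB : IsENuclear actE (fun b : B => ‖(b : A)‖) (fun b : B => ‖(b : A)‖) actB actB id)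
    (hext : ∀ n : ℕ, 1 ≤ n → ∀ φ : B → Matrix (Fin n) (Fin n) E,
      IsCcpModuleMap (fun b : B => ‖(b : A)‖) matCStarNorm actB (matAct actE) φ →
      ∃ φext : A → Matrix (Fin n) (Fin n) E,
        IsCcpModuleMap (fun a : A => ‖a‖) matCStarNorm actA (matAct actE) φext ∧
        ∀ b : B, φext (b : A) = φ b)
    (G : Finset B) (δ : ℝ) (hδ : 0 < δ) :
    ∃ n : ℕ, 1 ≤ n ∧
      ∃ (φ : A → Matrix (Fin n) (Fin n) E) (ψ : Matrix (Fin n) (Fin n) E → A),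
        IsCcpModuleMap (fun a : A => ‖a‖) matCStarNorm actA (matAct actE) φ ∧
        IsCcpModuleMap matCStarNorm (fun a : A => ‖a‖) (matAct actE) actA ψ ∧
        ∀ b ∈ G, ‖ψ (φ b) - b‖ < δ := by
  obtain ⟨n, hn, φ, ψ, hφ, hψ, happrox⟩ := hB G δ hδ
  obtain ⟨φext, hφext, hφext_eq⟩ := hext n hn φ hφ
  have hincl := isCcpModuleMap_of_starAlgHom (NonUnitalStarSubalgebraClass.subtype B)
    (nR := fun b : B => ‖(b : A)‖) (nS := fun a : A => ‖a‖) (actS := actA)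
    (fun _ => le_rfl) hactB
  refine ⟨n, hn, φext, _, hφext, hincl.comp hψ, fun b hb => ?_⟩
  simpa [hφext_eq] using happrox b hb

end CStarModulePaper

open CStarModulePaper in
theorem enuclear_iff_locally_enuclear_general {𝔄 A E : Type*}
    [NonUnitalCStarAlgebra A] [NonUnitalCStarAlgebra E]
    (actA : A → 𝔄 → A) (actE : E → 𝔄 → E)
    (hinj : ∀ (B : NonUnitalStarSubalgebra ℂ A), IsClosed (B : Set A) →
      ∀ (actB : B → 𝔄 → B), (∀ (b : B) (α : 𝔄), (actB b α : A) = actA (b : A) α) →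
      ∀ (n : ℕ), 1 ≤ n →
      ∀ (φ : B → Matrix (Fin n) (Fin n) E),
        IsCcpModuleMap (fun b : B => ‖(b : A)‖) matCStarNorm actB (matAct actE) φ →
        ∃ φext : A → Matrix (Fin n) (Fin n) E,
          IsCcpModuleMap (fun a : A => ‖a‖) matCStarNorm actA (matAct actE) φext ∧
          ∀ b : B, φext (b : A) = φ b) :
    IsENuclear actE (fun a : A => ‖a‖) (fun a : A => ‖a‖) actA actA (id : A → A) ↔
    (∀ (F : Finset A) (ε : ℝ), 0 < ε →
      ∃ (B : NonUnitalStarSubalgebra ℂ A), IsClosed (B : Set A) ∧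
        ∃ (actB : B → 𝔄 → B), (∀ (b : B) (α : 𝔄), (actB b α : A) = actA (b : A) α) ∧
          IsENuclear actE (fun b : B => ‖(b : A)‖) (fun b : B => ‖(b : A)‖) actB actB
            (id : B → B) ∧
          ∀ a ∈ F, ∃ b ∈ B, ‖a - b‖ < ε) := by
  refine ⟨fun h F ε hε => ⟨⊤, by simp, fun b α => NonUnitalStarAlgebra.toTop (actA b α),
    fun _ _ => rfl, IsENuclear.top h,
    fun a _ => ⟨a, NonUnitalStarAlgebra.mem_top, by simpa using hε⟩⟩, fun hloc F ε hε => ?_⟩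
  classical
  obtain ⟨B, hBcl, actB, hactB, hB, hnear⟩ := hloc F (ε / 3) (by positivity)
  choose b hbB hb using hnear
  let approximants : Finset B := F.attach.image fun a => ⟨b a.1 a.2, hbB a.1 a.2⟩
  obtain ⟨n, hn, φ, ψ, hφ, hψ, happrox⟩ :=
    hB.exists_approx_of_extend hactB (hinj B hBcl actB hactB) approximants
      (ε / 3) (by positivity)
  refine ⟨n, hn, φ, ψ, hφ, hψ, fun a ha => ?_⟩
  have hT := hψ.comp hφ
  calc ‖ψ (φ a) - id a‖ ≤ ‖ψ (φ (b a ha)) - b a ha‖ + 2 * ‖a - b a ha‖ :=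
        norm_sub_self_le_of_contraction hT.map_sub hT.contractive a (b a ha)
    _ < ε / 3 + 2 * (ε / 3) := by
        gcongr
        · exact happrox ⟨b a ha, hbB a ha⟩ (Finset.mem_image_of_mem _ (F.mem_attach ⟨a, ha⟩))
        · exact hb a ha
    _ = ε := by ring

open CStarModulePaper in
/-- If `E` is injective as an `𝔄`-module (c.c.p. module maps into `Mₙ(E)`
defined on C*-subalgebras and `𝔄`-submodules of `A` extend to `A`), then `A` is
`E`-nuclear iff `A` is locally `E`-nuclear. -/
theorem enuclear_iff_locally_enuclear {𝔄 A E : Type*} [NonUnitalCStarAlgebra 𝔄]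
    [NonUnitalCStarAlgebra A] [NonUnitalCStarAlgebra E]
    (actA : A → 𝔄 → A) (actE : E → 𝔄 → E)
    (hA : IsCStarAction actA) (hE : IsCStarAction actE)
    (hinj : ∀ (B : NonUnitalStarSubalgebra ℂ A), IsClosed (B : Set A) →
      ∀ (actB : B → 𝔄 → B), (∀ (b : B) (α : 𝔄), (actB b α : A) = actA (b : A) α) →
      ∀ (n : ℕ), 1 ≤ n →
      ∀ (φ : B → Matrix (Fin n) (Fin n) E),
        IsCcpModuleMap (fun b : B => ‖(b : A)‖) matCStarNorm actB (matAct actE) φ →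
        ∃ φext : A → Matrix (Fin n) (Fin n) E,
          IsCcpModuleMap (fun a : A => ‖a‖) matCStarNorm actA (matAct actE) φext ∧
          ∀ b : B, φext (b : A) = φ b) :
    IsENuclear actE (fun a : A => ‖a‖) (fun a : A => ‖a‖) actA actA (id : A → A) ↔
    (∀ (F : Finset A) (ε : ℝ), 0 < ε →
      ∃ (B : NonUnitalStarSubalgebra ℂ A), IsClosed (B : Set A) ∧
        ∃ (actB : B → 𝔄 → B), (∀ (b : B) (α : 𝔄), (actB b α : A) = actA (b : A) α) ∧
          IsENuclear actE (fun b : B => ‖(b : A)‖) (fun b : B => ‖(b : A)‖) actB actB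
            (id : B → B) ∧
          ∀ a ∈ F, ∃ b ∈ B, ‖a - b‖ < ε) :=
  enuclear_iff_locally_enuclear_general actA actE hinj
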